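/- Let (V, ω) be a finite-dimensional real symplectic vector space, J an ω-compatible complex structure, and g(x, y) = ω(x, Jy) the associated inner product. Fix a nonzero vector v ∈ V and a real number λ > 0, and define J′ : V → V as the linear map with J′w = λ·Jw for w ∈ ℝ·v, J′w = λ⁻¹·Jw for w ∈ ℝ·(Jv), and J′w = Jw for w in the g-orthogonal complement of span{v, Jv}. Then J′ is again an ω-compatible complex structure on V: J′ ∘ J′ = −id, ω(J′x, J′y) = ω(x, y) for all x, y ∈ V, and ω(x, J′x) > 0 for all x ≠ 0. -/

import Mathlib

/-!
Since `J` is `ω`-compatible, `span{v, Jv}` is a symplectic plane and every `x` splits as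
`x = a v + b Jv + w` with `w` in its `ω`-complement, which `J` preserves.  In these coordinates
`ω(x, y) = (a d - b c) ω(v, Jv) + ω(w, u)` for `y = c v + d Jv + u`, and `J'` acts on the
coefficients by `(a, b) ↦ (-b/λ, aλ)` and on `w` by `J`.  The determinant `a d - b c` is
unchanged by this map and `ω(x, J'x) = (λ a² + b²/λ) ω(v, Jv) + ω(w, Jw)`, which is positive
for `x ≠ 0`.
-/

section

variable {V : Type*} [AddCommGroup V] [Module ℝ V]

structure LinearMap.IsCompatibleComplexStructure (ω : V →ₗ[ℝ] V →ₗ[ℝ] ℝ) (J : V →ₗ[ℝ] V) :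
    Prop where
  apply_apply : ∀ x, J (J x) = -x
  map_apply_apply : ∀ x y, ω (J x) (J y) = ω x y
  pos : ∀ x, x ≠ 0 → 0 < ω x (J x)

/-- The hypotheses of `apply_of_orthogonal` say `g v w = g (J v) w = 0` for the inner product
`g x y = ω x (J y)`. -/
structure LinearMap.IsRescaleAlong (ω : V →ₗ[ℝ] V →ₗ[ℝ] ℝ) (J J' : V →ₗ[ℝ] V) (v : V)
    (lam : ℝ) : Prop where
  apply_self : J' v = lam • J v
  apply_apply_self : J' (J v) = lam⁻¹ • J (J v)
  apply_of_orthogonal : ∀ w, ω v (J w) = 0 → ω (J v) (J w) = 0 → J' w = J w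

namespace LinearMap.IsCompatibleComplexStructure

variable {ω : V →ₗ[ℝ] V →ₗ[ℝ] ℝ} {J : V →ₗ[ℝ] V}

theorem apply_apply_comm (hω : ω.IsAlt) (hJ : IsCompatibleComplexStructure ω J) (x y : V) :
    ω x (J y) = ω y (J x) := by
  rw [← hJ.map_apply_apply x (J y), hJ.apply_apply, map_neg, hω.neg]

theorem exists_eq_smul_add_smul_add (hω : ω.IsAlt) (hJ : IsCompatibleComplexStructure ω J)
    {v : V} (hv : v ≠ 0) (x : V) :
    ∃ a b : ℝ, ∃ w : V, ω v w = 0 ∧ ω v (J w) = 0 ∧ x = a • v + b • J v + w := by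
  have hvv : ω v (J v) ≠ 0 := (hJ.pos v hv).ne'
  refine ⟨ω x (J v) / ω v (J v), ω v x / ω v (J v),
    x - (ω x (J v) / ω v (J v)) • v - (ω v x / ω v (J v)) • J v, ?_, ?_, by abel⟩
  · simp only [map_sub, map_smul, smul_eq_mul, hω.self_eq_zero]
    field_simp
    ring
  · simp only [map_sub, map_smul, smul_eq_mul, hJ.apply_apply, map_neg, hω.self_eq_zero,
      neg_zero, mul_zero, sub_zero, apply_apply_comm hω hJ v x]
    field_simp
    ring

theorem apply_smul_add_smul_add (hω : ω.IsAlt) (hJ : IsCompatibleComplexStructure ω J)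
    {v w u : V} (hw : ω v w = 0) (hJw : ω v (J w) = 0) (hu : ω v u = 0) (hJu : ω v (J u) = 0)
    (a b c d : ℝ) :
    ω (a • v + b • J v + w) (c • v + d • J v + u) = (a * d - b * c) * ω v (J v) + ω w u := by
  have hJv_v : ω (J v) v = -ω v (J v) := by rw [hω.neg]
  have hJv_u : ω (J v) u = 0 := by rw [← hω.neg, apply_apply_comm hω hJ, hJu, neg_zero]
  have hw_v : ω w v = 0 := by rw [← hω.neg, hw, neg_zero]
  have hw_Jv : ω w (J v) = 0 := by rw [apply_apply_comm hω hJ, hJw]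
  simp only [map_add, map_smul, LinearMap.add_apply, LinearMap.smul_apply, smul_eq_mul,
    hω.self_eq_zero, hu, hJv_v, hJv_u, hw_v, hw_Jv]
  ring

end LinearMap.IsCompatibleComplexStructure

namespace LinearMap.IsRescaleAlong

variable {ω : V →ₗ[ℝ] V →ₗ[ℝ] ℝ} {J J' : V →ₗ[ℝ] V} {v : V} {lam : ℝ}

theorem apply_smul_add_smul_add (hJ : ω.IsCompatibleComplexStructure J)
    (hJ' : IsRescaleAlong ω J J' v lam) {w : V} (hw : ω v w = 0) (hJw : ω v (J w) = 0)
    (a b : ℝ) :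
    J' (a • v + b • J v + w) = -(b * lam⁻¹) • v + (a * lam) • J v + J w := by
  rw [map_add, map_add, map_smul, map_smul, hJ'.apply_self, hJ'.apply_apply_self,
    hJ.apply_apply, hJ'.apply_of_orthogonal w hJw (by rw [hJ.map_apply_apply, hw])]
  module

theorem isCompatibleComplexStructure (hω : ω.IsAlt) (hJ : ω.IsCompatibleComplexStructure J)
    (hv : v ≠ 0) (hlam : 0 < lam) (hJ' : IsRescaleAlong ω J J' v lam) :
    ω.IsCompatibleComplexStructure J' := by
  have hJJw {w : V} (hw : ω v w = 0) : ω v (J (J w)) = 0 := by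
    rw [hJ.apply_apply, map_neg, hw, neg_zero]
  refine ⟨fun x => ?_, fun x y => ?_, fun x hx => ?_⟩
  · obtain ⟨a, b, w, hw, hJw, rfl⟩ := hJ.exists_eq_smul_add_smul_add hω hv x
    rw [hJ'.apply_smul_add_smul_add hJ hw hJw,
      hJ'.apply_smul_add_smul_add hJ hJw (hJJw hw), hJ.apply_apply, neg_mul,
      inv_mul_cancel_right₀ hlam.ne', mul_inv_cancel_right₀ hlam.ne']
    module
  · obtain ⟨a, b, w, hw, hJw, rfl⟩ := hJ.exists_eq_smul_add_smul_add hω hv x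
    obtain ⟨c, d, u, hu, hJu, rfl⟩ := hJ.exists_eq_smul_add_smul_add hω hv y
    rw [hJ'.apply_smul_add_smul_add hJ hw hJw, hJ'.apply_smul_add_smul_add hJ hu hJu,
      hJ.apply_smul_add_smul_add hω hJw (hJJw hw) hJu (hJJw hu),
      hJ.apply_smul_add_smul_add hω hw hJw hu hJu, hJ.map_apply_apply]
    field_simp
    ring
  · obtain ⟨a, b, w, hw, hJw, rfl⟩ := hJ.exists_eq_smul_add_smul_add hω hv x
    rw [hJ'.apply_smul_add_smul_add hJ hw hJw,
      hJ.apply_smul_add_smul_add hω hw hJw hJw (hJJw hw),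
      show a * (a * lam) - b * -(b * lam⁻¹) = lam * a ^ 2 + lam⁻¹ * b ^ 2 by ring]
    have hvv := hJ.pos v hv
    rcases eq_or_ne w 0 with rfl | hw
    · have hab : a ≠ 0 ∨ b ≠ 0 := by
        by_contra! hab
        simp [hab.1, hab.2] at hx
      rw [map_zero, map_zero, LinearMap.zero_apply, add_zero]
      rcases hab with ha | hb <;> positivity
    · exact add_pos_of_nonneg_of_pos (by positivity) (hJ.pos w hw)

end LinearMap.IsRescaleAlong

end

theorem stmt_11_general {V : Type*} [AddCommGroup V] [Module ℝ V]
    (ω : V →ₗ[ℝ] V →ₗ[ℝ] ℝ)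
    (halt : ∀ x, ω x x = 0)
    (J : V →ₗ[ℝ] V)
    (hJsq : ∀ x, J (J x) = -x)
    (hJinv : ∀ x y, ω (J x) (J y) = ω x y)
    (hJpos : ∀ x, x ≠ 0 → 0 < ω x (J x))
    (v : V) (hv : v ≠ 0) (lam : ℝ) (hlam : 0 < lam)
    (J' : V →ₗ[ℝ] V)
    (hv' : J' v = lam • J v)
    (hJv' : J' (J v) = lam⁻¹ • J (J v))
    (horth : ∀ w : V, ω v (J w) = 0 → ω (J v) (J w) = 0 → J' w = J w) :
    (∀ x, J' (J' x) = -x) ∧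
    (∀ x y, ω (J' x) (J' y) = ω x y) ∧
    (∀ x, x ≠ 0 → 0 < ω x (J' x)) := by
  have hJ' := LinearMap.IsRescaleAlong.isCompatibleComplexStructure halt ⟨hJsq, hJinv, hJpos⟩ hv
    hlam ⟨hv', hJv', horth⟩
  exact ⟨hJ'.apply_apply, hJ'.map_apply_apply, hJ'.pos⟩

/-- **Rescaling a compatible complex structure along a symplectic plane.**
Let `(V, ω)` be a finite-dimensional real symplectic vector space, `J` an
`ω`-compatible complex structure, `g(x,y) = ω(x, Jy)` the associated inner
product, `v ≠ 0` and `λ > 0`.  If `J' : V → V` is the linear map with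
`J'v = λ·Jv`, `J'(Jv) = λ⁻¹·J(Jv)`, and `J'w = Jw` for `w` in the
`g`-orthogonal complement of `span{v, Jv}` (i.e. `g(v,w) = g(Jv,w) = 0`),
then `J'` is again `ω`-compatible: `J'² = −id`, `ω(J'x, J'y) = ω(x, y)`,
and `ω(x, J'x) > 0` for `x ≠ 0`. -/
theorem stmt_11 {V : Type*} [AddCommGroup V] [Module ℝ V] [FiniteDimensional ℝ V]
    (ω : V →ₗ[ℝ] V →ₗ[ℝ] ℝ)
    (halt : ∀ x, ω x x = 0)
    (hnd : ∀ x, (∀ y, ω x y = 0) → x = 0)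
    (J : V →ₗ[ℝ] V)
    (hJsq : ∀ x, J (J x) = -x)
    (hJinv : ∀ x y, ω (J x) (J y) = ω x y)
    (hJpos : ∀ x, x ≠ 0 → 0 < ω x (J x))
    (v : V) (hv : v ≠ 0) (lam : ℝ) (hlam : 0 < lam)
    (J' : V →ₗ[ℝ] V)
    (hv' : J' v = lam • J v)
    (hJv' : J' (J v) = lam⁻¹ • J (J v))
    (horth : ∀ w : V, ω v (J w) = 0 → ω (J v) (J w) = 0 → J' w = J w) :
    (∀ x, J' (J' x) = -x) ∧
    (∀ x y, ω (J' x) (J' y) = ω x y) ∧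
    (∀ x, x ≠ 0 → 0 < ω x (J' x)) :=
  stmt_11_general ω halt J hJsq hJinv hJpos v hv lam hlam J' hv' hJv' horth
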